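/- The eigenvalues of the preconditioned matrix A·Q₅⁻¹ belong to {1, (1+√3 i)/2, (1−√3 i)/2}, and J = 𝒜 Q₅⁻¹ satisfies (J − I)(J² − J + I) = 0. -/

import Mathlib

open Matrix Complex

/-- A 3×3 block matrix with blocks of sizes n, m, l. -/
def blk3 {n m l : ℕ}
    (M11 : Matrix (Fin n) (Fin n) ℝ) (M12 : Matrix (Fin n) (Fin m) ℝ) (M13 : Matrix (Fin n) (Fin l) ℝ)
    (M21 : Matrix (Fin m) (Fin n) ℝ) (M22 : Matrix (Fin m) (Fin m) ℝ) (M23 : Matrix (Fin m) (Fin l) ℝ)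
    (M31 : Matrix (Fin l) (Fin n) ℝ) (M32 : Matrix (Fin l) (Fin m) ℝ) (M33 : Matrix (Fin l) (Fin l) ℝ) :
    Matrix (Fin n ⊕ (Fin m ⊕ Fin l)) (Fin n ⊕ (Fin m ⊕ Fin l)) ℝ :=
  Matrix.fromBlocks M11
    (Matrix.of fun i j => Sum.elim (M12 i) (M13 i) j)
    (Matrix.of fun i j => Sum.elim (fun k => M21 k j) (fun k => M31 k j) i)
    (Matrix.fromBlocks M22 M23 M32 M33)

/-!
With `S` and `X` positive definite (full row rank of `B` and `C`), the saddle-point block of `Q₅`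
has the explicit Schur-complement inverse, and one computes
`J = 𝒜 Q₅⁻¹ = [[I, 0, 0], [0, I, Cᵀ X⁻¹], [C S⁻¹ B A⁻¹, -C S⁻¹, 0]]`.
Since `(C S⁻¹)(Cᵀ X⁻¹) = I` by the definition of `X`, the matrix `K = J - I` satisfies
`K³ + K² + K = 0`, which is `(J - I)(J² - J + I) = 0`. Every eigenvalue of `J` is therefore
a root of `(z - 1)(z² - z + 1)`.
-/

open Polynomial in
lemma spectrum_isRoot_of_aeval_eq_zero {𝕜 A : Type*} [Field 𝕜] [Ring A] [Algebra 𝕜 A]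
    {a : A} {p : 𝕜[X]} (hp : aeval a p = 0) : ∀ μ ∈ spectrum 𝕜 a, p.IsRoot μ := by
  nontriviality A
  intro μ hμ
  simpa [hp, spectrum.zero_eq] using spectrum.subset_polynomial_aeval a p ⟨μ, hμ, rfl⟩

lemma Matrix.vecMul_injective_of_rank_eq_card {m n K : Type*} [Fintype m] [Fintype n] [Field K]
    {B : Matrix m n K} (hB : B.rank = Fintype.card m) : Function.Injective B.vecMul := by
  rw [vecMul_injective_iff, linearIndependent_iff_card_eq_finrank_span, ← hB,
    rank_eq_finrank_span_row]
  rfl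

lemma eq_one_or_eq_of_sub_one_mul_sq_sub_add_one_eq_zero {μ : ℂ}
    (h : (μ - 1) * (μ ^ 2 - μ + 1) = 0) :
    μ = 1 ∨ μ = (1 + (Real.sqrt 3 : ℂ) * I) / 2 ∨
      μ = (1 - (Real.sqrt 3 : ℂ) * I) / 2 := by
  have hs3 : ((Real.sqrt 3 : ℝ) : ℂ) ^ 2 = 3 := by
    rw [← ofReal_pow, Real.sq_sqrt (by norm_num : (0 : ℝ) ≤ 3)]; norm_num
  have : (μ - 1) * ((μ - (1 + (Real.sqrt 3 : ℂ) * I) / 2) *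
      (μ - (1 - (Real.sqrt 3 : ℂ) * I) / 2)) = 0 := by
    linear_combination h - (μ - 1) * ((I ^ 2 / 4) * hs3 + (3/4) * I_sq)
  simpa only [mul_eq_zero, sub_eq_zero] using this

lemma Matrix.PosDef.mul_mul_transpose_of_rank_eq {m n : Type*} [Fintype m] [Fintype n]
    [DecidableEq n] {A : Matrix n n ℝ} (hA : A.PosDef) {B : Matrix m n ℝ}
    (hB : B.rank = Fintype.card m) : (B * A * Bᵀ).PosDef := by
  simpa using hA.mul_mul_conjTranspose_same (vecMul_injective_of_rank_eq_card hB)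

section Blk3

variable {n m l : ℕ}
  {M11 N11 : Matrix (Fin n) (Fin n) ℝ} {M12 N12 : Matrix (Fin n) (Fin m) ℝ}
  {M13 N13 : Matrix (Fin n) (Fin l) ℝ} {M21 N21 : Matrix (Fin m) (Fin n) ℝ}
  {M22 N22 : Matrix (Fin m) (Fin m) ℝ} {M23 N23 : Matrix (Fin m) (Fin l) ℝ}
  {M31 N31 : Matrix (Fin l) (Fin n) ℝ} {M32 N32 : Matrix (Fin l) (Fin m) ℝ}
  {M33 N33 : Matrix (Fin l) (Fin l) ℝ}

lemma blk3_mul :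
    blk3 M11 M12 M13 M21 M22 M23 M31 M32 M33 * blk3 N11 N12 N13 N21 N22 N23 N31 N32 N33 =
      blk3 (M11 * N11 + M12 * N21 + M13 * N31) (M11 * N12 + M12 * N22 + M13 * N32)
        (M11 * N13 + M12 * N23 + M13 * N33) (M21 * N11 + M22 * N21 + M23 * N31)
        (M21 * N12 + M22 * N22 + M23 * N32) (M21 * N13 + M22 * N23 + M23 * N33)
        (M31 * N11 + M32 * N21 + M33 * N31) (M31 * N12 + M32 * N22 + M33 * N32)
        (M31 * N13 + M32 * N23 + M33 * N33) := by
  ext (i | i | i) (j | j | j) <;>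
    simp [blk3, mul_apply, fromBlocks, Fintype.sum_sum_type, add_assoc]

lemma blk3_add :
    blk3 M11 M12 M13 M21 M22 M23 M31 M32 M33 + blk3 N11 N12 N13 N21 N22 N23 N31 N32 N33 =
      blk3 (M11 + N11) (M12 + N12) (M13 + N13) (M21 + N21) (M22 + N22) (M23 + N23)
        (M31 + N31) (M32 + N32) (M33 + N33) := by
  ext (i | i | i) (j | j | j) <;> simp [blk3, fromBlocks]

lemma blk3_sub :
    blk3 M11 M12 M13 M21 M22 M23 M31 M32 M33 - blk3 N11 N12 N13 N21 N22 N23 N31 N32 N33 =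
      blk3 (M11 - N11) (M12 - N12) (M13 - N13) (M21 - N21) (M22 - N22) (M23 - N23)
        (M31 - N31) (M32 - N32) (M33 - N33) := by
  ext (i | i | i) (j | j | j) <;> simp [blk3, fromBlocks]

lemma blk3_zero : blk3 (0 : Matrix (Fin n) (Fin n) ℝ) 0 0 (0 : Matrix (Fin m) (Fin n) ℝ) 0 0
    (0 : Matrix (Fin l) (Fin n) ℝ) 0 0 = 0 := by
  ext (i | i | i) (j | j | j) <;> simp [blk3, fromBlocks]

lemma blk3_one : blk3 (1 : Matrix (Fin n) (Fin n) ℝ) 0 0 (0 : Matrix (Fin m) (Fin n) ℝ) 1 0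
    (0 : Matrix (Fin l) (Fin n) ℝ) 0 1 = 1 := by
  ext (i | i | i) (j | j | j) <;> simp [blk3, fromBlocks, one_apply]

end Blk3

section SaddlePoint

variable {n m l : ℕ} {A : Matrix (Fin n) (Fin n) ℝ} {E : Matrix (Fin n) (Fin m) ℝ}
  {B : Matrix (Fin m) (Fin n) ℝ} {S : Matrix (Fin m) (Fin m) ℝ} {X : Matrix (Fin l) (Fin l) ℝ}

lemma mul_inv_mul_mul_eq_mul (hS : B * A⁻¹ * E = S) {k : ℕ} (M : Matrix (Fin m) (Fin k) ℝ) :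
    B * (A⁻¹ * (E * M)) = S * M := by
  rw [← hS, Matrix.mul_assoc, Matrix.mul_assoc]

lemma inv_blk3_saddle (hA : IsUnit A.det) (hS : B * A⁻¹ * E = S) (hSu : IsUnit S.det)
    (hX : IsUnit X.det) :
    (blk3 A E 0 B 0 0 0 0 X)⁻¹ =
      blk3 (A⁻¹ - A⁻¹ * E * S⁻¹ * B * A⁻¹) (A⁻¹ * E * S⁻¹) 0
        (S⁻¹ * B * A⁻¹) (-S⁻¹) 0 0 0 X⁻¹ := by
  refine inv_eq_right_inv ?_
  rw [blk3_mul, ← blk3_one]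
  congr 1 <;> simp [Matrix.mul_sub, Matrix.mul_assoc, mul_nonsing_inv _ hA,
    mul_nonsing_inv_cancel_left _ _ hA, mul_inv_mul_mul_eq_mul hS,
    mul_nonsing_inv_cancel_left _ _ hSu, mul_nonsing_inv _ hSu, mul_nonsing_inv _ hX]

lemma blk3_mul_inv_blk3_saddle (hA : IsUnit A.det) (hS : B * A⁻¹ * E = S) (hSu : IsUnit S.det)
    (hX : IsUnit X.det) (F : Matrix (Fin m) (Fin l) ℝ) (C : Matrix (Fin l) (Fin m) ℝ) :
    blk3 A E 0 B 0 F 0 C 0 * (blk3 A E 0 B 0 0 0 0 X)⁻¹ =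
      blk3 1 0 0 0 1 (F * X⁻¹) (C * S⁻¹ * B * A⁻¹) (-(C * S⁻¹)) 0 := by
  rw [inv_blk3_saddle hA hS hSu hX, blk3_mul]
  congr 1 <;> simp [Matrix.mul_sub, Matrix.mul_assoc, mul_nonsing_inv _ hA,
    mul_nonsing_inv_cancel_left _ _ hA, mul_inv_mul_mul_eq_mul hS,
    mul_nonsing_inv_cancel_left _ _ hSu, mul_nonsing_inv _ hSu]

end SaddlePoint

lemma sub_one_mul_sq_sub_add_one_eq_zero_of_eq_blk3 {n m l : ℕ} {U : Matrix (Fin m) (Fin l) ℝ}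
    {G : Matrix (Fin l) (Fin n) ℝ} {T : Matrix (Fin l) (Fin m) ℝ} (hTU : T * U = 1)
    {J : Matrix (Fin n ⊕ (Fin m ⊕ Fin l)) (Fin n ⊕ (Fin m ⊕ Fin l)) ℝ}
    (hJ : J = blk3 1 0 0 0 1 U G (-T) 0) :
    (J - 1) * (J ^ 2 - J + 1) = 0 := by
  have hK : J - 1 = blk3 0 0 0 0 0 U G (-T) (-1) := by
    rw [hJ, ← blk3_one, blk3_sub]; congr 1 <;> simp
  have hK2 : (J - 1) * (J - 1) = blk3 0 0 0 (U * G) (-(U * T)) (-U) (-G) T 0 := by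
    rw [hK, blk3_mul]; congr 1 <;> simp [hTU]
  have hK3 : (J - 1) * ((J - 1) * (J - 1)) = blk3 0 0 0 (-(U * G)) (U * T) 0 0 0 1 := by
    rw [hK2, hK, blk3_mul]; congr 1 <;> simp [← Matrix.mul_assoc T, hTU]
  calc (J - 1) * (J ^ 2 - J + 1)
    _ = (J - 1) * ((J - 1) * (J - 1)) + (J - 1) * (J - 1) + (J - 1) := by noncomm_ring
    _ = 0 := by rw [hK3, hK2, hK, blk3_add, blk3_add, ← blk3_zero]; congr 1 <;> simp

theorem stmt8 {n m l : ℕ} (A : Matrix (Fin n) (Fin n) ℝ) (B : Matrix (Fin m) (Fin n) ℝ)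
    (C : Matrix (Fin l) (Fin m) ℝ) (hA : A.PosDef) (hB : B.rank = m) (hC : C.rank = l)
    (S : Matrix (Fin m) (Fin m) ℝ) (hS : S = B * A⁻¹ * Bᵀ)
    (X : Matrix (Fin l) (Fin l) ℝ) (hX : X = C * S⁻¹ * Cᵀ)
    (𝒜 Q₅ : Matrix (Fin n ⊕ (Fin m ⊕ Fin l)) (Fin n ⊕ (Fin m ⊕ Fin l)) ℝ)
    (h𝒜 : 𝒜 = blk3 A Bᵀ 0 B 0 Cᵀ 0 C 0)
    (hQ : Q₅ = blk3 A Bᵀ 0 B 0 0 0 0 X)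
    (J : Matrix (Fin n ⊕ (Fin m ⊕ Fin l)) (Fin n ⊕ (Fin m ⊕ Fin l)) ℝ)
    (hJ : J = 𝒜 * Q₅⁻¹) :
    (∀ μ ∈ spectrum ℂ (J.map Complex.ofReal),
      μ = 1 ∨ μ = (1 + (Real.sqrt 3 : ℂ) * Complex.I) / 2
        ∨ μ = (1 - (Real.sqrt 3 : ℂ) * Complex.I) / 2) ∧
    (J - 1) * (J ^ 2 - J + 1) = 0 := by
  have hS' : S.PosDef := hS ▸ hA.inv.mul_mul_transpose_of_rank_eq (by simpa using hB)
  have hX' : X.PosDef := hX ▸ hS'.inv.mul_mul_transpose_of_rank_eq (by simpa using hC)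
  have hXS : C * S⁻¹ * (Cᵀ * X⁻¹) = 1 := by
    rw [← Matrix.mul_assoc, ← hX, mul_nonsing_inv _ hX'.det_pos.ne'.isUnit]
  have hcubic : (J - 1) * (J ^ 2 - J + 1) = 0 :=
    sub_one_mul_sq_sub_add_one_eq_zero_of_eq_blk3 hXS <| by
      rw [hJ, h𝒜, hQ, blk3_mul_inv_blk3_saddle hA.det_pos.ne'.isUnit hS.symm
        hS'.det_pos.ne'.isUnit hX'.det_pos.ne'.isUnit]
  refine ⟨fun μ hμ => eq_one_or_eq_of_sub_one_mul_sq_sub_add_one_eq_zero ?_, hcubic⟩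
  have hcubicℂ : Polynomial.aeval (J.map ofReal)
      ((Polynomial.X - 1) * (Polynomial.X ^ 2 - Polynomial.X + 1) : Polynomial ℂ) = 0 := by
    have := congrArg ofRealHom.mapMatrix hcubic
    simp only [map_mul, map_sub, map_add, map_pow, map_one, map_zero, Polynomial.aeval_X]
      at this ⊢
    exact this
  simpa using spectrum_isRoot_of_aeval_eq_zero hcubicℂ μ hμ
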